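/- arXiv:2310.02729 — 8 statements merged into one kernel-verified Lean document; each statement's English description precedes it below -/
import Mathlib

section
/- If the zero-extended vector (0, u_1, ..., u_T) is concave and element-wise increasing, and the zero-extended vector (0, l_1, ..., l_T) is convex and element-wise increasing, and (0,u_1,...,u_T) + R·(0,l_1,...,l_T) is element-wise increasing (where R reverses the order of entries), then l_k ≤ u_k for all k ∈ {1,...,T}. -/
open Finset

noncomputable section

/-- The UL-flexibility set: all signals `p` such that for every nonempty
subset `S` of time indices with `|S| = k`, `l k ≤ Δt * ∑_{t∈S} p t ≤ u k`. -/
def ULset (T : ℕ) (Δt : ℝ) (u l : ℕ → ℝ) : Set (Fin T → ℝ) :=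
  {p | ∀ S : Finset (Fin T), S.Nonempty →
    l S.card ≤ Δt * ∑ t ∈ S, p t ∧ Δt * ∑ t ∈ S, p t ≤ u S.card}

/-- Zero extension of a parameter vector: value 0 at index 0. -/
def ZExt (v : ℕ → ℝ) : ℕ → ℝ := fun k => if k = 0 then 0 else v k

/-- Valid UL parameters: the zero-extension of `u` is concave, nonnegative and
increasing; the zero-extension of `l` is convex, nonnegative and increasing; and
the zero-extension of `u` plus the reversed zero-extension of `l` is increasing. -/
def ValidUL (T : ℕ) (u l : ℕ → ℝ) : Prop :=
  (∀ j, 1 ≤ j → j + 1 ≤ T → ZExt u (j - 1) + ZExt u (j + 1) ≤ 2 * ZExt u j) ∧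
  (∀ k, k ≤ T → 0 ≤ ZExt u k) ∧
  (∀ j, j + 1 ≤ T → ZExt u j ≤ ZExt u (j + 1)) ∧
  (∀ j, 1 ≤ j → j + 1 ≤ T → 2 * ZExt l j ≤ ZExt l (j - 1) + ZExt l (j + 1)) ∧
  (∀ k, k ≤ T → 0 ≤ ZExt l k) ∧
  (∀ j, j + 1 ≤ T → ZExt l j ≤ ZExt l (j + 1)) ∧
  (∀ j, 1 ≤ j → j ≤ T →
    ZExt l (T - j + 1) - ZExt l (T - j) ≤ ZExt u j - ZExt u (j - 1))

/-- Vertex candidate `p^(k)` (0-based time index `t` corresponds to paper index `t+1`). -/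
def ULvertex (T : ℕ) (Δt : ℝ) (u l : ℕ → ℝ) (k : ℕ) : Fin T → ℝ :=
  fun t => if (t : ℕ) < k then (ZExt u ((t : ℕ) + 1) - ZExt u (t : ℕ)) / Δt
           else (ZExt l (T - (t : ℕ)) - ZExt l (T - (t : ℕ) - 1)) / Δt

/-- If the zero-extension of `u` is concave and increasing, the
zero-extension of `l` is convex and increasing, and their sum (with `l` reversed)
is increasing, then `l k ≤ u k` for all `k ∈ {1,…,T}`. -/
theorem l_le_u (T : ℕ) (hT : 1 ≤ T) (u l : ℕ → ℝ)
    (hUconc : ∀ j, 1 ≤ j → j + 1 ≤ T → ZExt u (j - 1) + ZExt u (j + 1) ≤ 2 * ZExt u j)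
    (hUinc : ∀ j, j + 1 ≤ T → ZExt u j ≤ ZExt u (j + 1))
    (hLconv : ∀ j, 1 ≤ j → j + 1 ≤ T → 2 * ZExt l j ≤ ZExt l (j - 1) + ZExt l (j + 1))
    (hLinc : ∀ j, j + 1 ≤ T → ZExt l j ≤ ZExt l (j + 1))
    (hCoup : ∀ j, 1 ≤ j → j ≤ T →
      ZExt l (T - j + 1) - ZExt l (T - j) ≤ ZExt u j - ZExt u (j - 1)) :
    ∀ k, 1 ≤ k → k ≤ T → l k ≤ u k := by
  intro k hk1 hkT
  set A : ℕ → ℝ := fun i => ZExt l i - ZExt l (i - 1) with hA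
  set B : ℕ → ℝ := fun i => ZExt u i - ZExt u (i - 1) with hB
  -- A is increasing on [1, T]
  have amono : ∀ i j : ℕ, 1 ≤ i → i ≤ j → j ≤ T → A i ≤ A j := by
    intro i j hi hij hjT
    induction j with
    | zero => omega
    | succ m ih =>
      rcases Nat.lt_or_ge i (m + 1) with h | h
      · have him : i ≤ m := by omega
        have h1 : A i ≤ A m := ih him (by omega)
        have h2 : A m ≤ A (m + 1) := by
          have hm1 : 1 ≤ m := by omega
          have := hLconv m hm1 hjT
          simp only [hA, Nat.add_sub_cancel]
          linarith
        linarith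
      · have : i = m + 1 := by omega
        rw [this]
  -- B is decreasing on [1, T]
  have bmono : ∀ i j : ℕ, 1 ≤ i → i ≤ j → j ≤ T → B j ≤ B i := by
    intro i j hi hij hjT
    induction j with
    | zero => omega
    | succ m ih =>
      rcases Nat.lt_or_ge i (m + 1) with h | h
      · have him : i ≤ m := by omega
        have h1 : B m ≤ B i := ih him (by omega)
        have h2 : B (m + 1) ≤ B m := by
          have hm1 : 1 ≤ m := by omega
          have := hUconc m hm1 hjT
          simp only [hB, Nat.add_sub_cancel]
          linarith
        linarith
      · have : i = m + 1 := by omega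
        rw [this]
  have hL0 : ZExt l 0 = 0 := by simp [ZExt]
  have hU0 : ZExt u 0 = 0 := by simp [ZExt]
  have hLsum : ZExt l k = ∑ i ∈ Finset.range k, A (i + 1) := by
    have := Finset.sum_range_sub (f := fun i => ZExt l i) k
    simp only [hA, Nat.add_sub_cancel]
    rw [this, hL0, sub_zero]
  have hUsum : ZExt u k = ∑ i ∈ Finset.range k, B (i + 1) := by
    have := Finset.sum_range_sub (f := fun i => ZExt u i) k
    simp only [hB, Nat.add_sub_cancel]
    rw [this, hU0, sub_zero]
  have key : ∀ i ∈ Finset.range k, A (i + 1) ≤ B (k - i) := by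
    intro i hi
    rw [Finset.mem_range] at hi
    have h1 : A (i + 1) ≤ A (T - k + i + 1) := amono _ _ (by omega) (by omega) (by omega)
    have h2 : A (T - k + i + 1) ≤ B (k - i) := by
      have hc := hCoup (k - i) (by omega) (by omega)
      have e1 : T - (k - i) = T - k + i := by omega
      have e2 : T - (k - i) + 1 = T - k + i + 1 := by omega
      simp only [hA, hB, e1, e2, Nat.add_sub_cancel] at *
      linarith
    linarith
  have hrefl : ∑ i ∈ Finset.range k, B (k - i) = ∑ i ∈ Finset.range k, B (i + 1) := by
    rw [← Finset.sum_range_reflect (fun i => B (i + 1)) k]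
    apply Finset.sum_congr rfl
    intro i hi
    rw [Finset.mem_range] at hi
    congr 1
    omega
  have hlk : ZExt l k = l k := by simp [ZExt]; omega
  have huk : ZExt u k = u k := by simp [ZExt]; omega
  calc l k = ZExt l k := hlk.symm
    _ = ∑ i ∈ Finset.range k, A (i + 1) := hLsum
    _ ≤ ∑ i ∈ Finset.range k, B (k - i) := Finset.sum_le_sum key
    _ = ∑ i ∈ Finset.range k, B (i + 1) := hrefl
    _ = ZExt u k := hUsum.symm
    _ = u k := huk
end
end

section
/- Let u, l ∈ ℝ^T be valid UL-parameters (zero-extension of u concave, nonnegative, increasing; zero-extension of l convex, nonnegative, increasing; the sum of the zero-extension of u and the reversed zero-extension of l is increasing). Then the constant power signal p with p_t = u_T/(T·Δt) for all t satisfies: for every subset S ⊆ {1,...,T} with |S| = k, l_k ≤ Δt·∑_{t∈S} p_t ≤ u_k. In particular the UL-flexibility set F(u,l) is nonempty. -/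
open Finset

noncomputable section

/-! With `k = |S|`, the constant signal gives `Δt · ∑_{t∈S} p_t = k u_T / T`, so the claim is
`T l_k ≤ k u_T ≤ T u_k`. The increments of a concave sequence vanishing at `0` decrease, so the
average `u_k / k` of the first `k` of them is at least the average `u_T / T` of all `T`; dually
`l_k / k ≤ l_T / T` by convexity, and summing the cross condition over all `j` gives `l_T ≤ u_T`. -/

section Sequences

variable {α : Type*} [CommRing α] [LinearOrder α] [IsStrictOrderedRing α]

theorem card_mul_sum_range_le_of_antitoneOn {d : ℕ → α} {k m : ℕ} (hkm : k ≤ m)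
    (hd : AntitoneOn d (range m)) :
    k * ∑ j ∈ range m, d j ≤ m * ∑ j ∈ range k, d j := by
  -- Chebyshev's sum inequality for `d` and the (antitone) indicator of `range k`
  have hind : Antitone fun j : ℕ => if j ∈ range k then (1 : α) else 0 := by
    intro i j hij
    by_cases hj : j < k <;> by_cases hi : i < k <;> simp [hi, hj]
    omega
  have cheb := (hd.monovaryOn (hind.antitoneOn _)).sum_mul_sum_le_card_mul_sum
  have hsub : range m ∩ range k = range k := inter_eq_right.mpr (range_subset_range.mpr hkm)
  simp only [mul_ite, mul_one, mul_zero, sum_ite_mem, hsub, card_range] at cheb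
  simpa [mul_comm] using cheb

theorem antitoneOn_sub_of_concave {f : ℕ → α} {n : ℕ}
    (hf : ∀ j, j + 2 ≤ n → f j + f (j + 2) ≤ 2 * f (j + 1)) :
    AntitoneOn (fun j => f (j + 1) - f j) (range n) := by
  rw [coe_range]
  refine antitoneOn_of_add_one_le Set.ordConnected_Iio fun j _ _ hj => ?_
  have := hf j (by simp at hj; omega)
  linarith

theorem card_mul_le_mul_of_concave {f : ℕ → α} {k n : ℕ} (hkn : k ≤ n) (hf0 : f 0 = 0)
    (hf : ∀ j, j + 2 ≤ n → f j + f (j + 2) ≤ 2 * f (j + 1)) :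
    k * f n ≤ n * f k := by
  have := card_mul_sum_range_le_of_antitoneOn hkn (antitoneOn_sub_of_concave hf)
  simpa only [sum_range_sub, hf0, sub_zero] using this

theorem mul_le_card_mul_of_convex {f : ℕ → α} {k n : ℕ} (hkn : k ≤ n) (hf0 : f 0 = 0)
    (hf : ∀ j, j + 2 ≤ n → 2 * f (j + 1) ≤ f j + f (j + 2)) :
    n * f k ≤ k * f n := by
  have := card_mul_le_mul_of_concave (f := -f) hkn (by simp [hf0])
    fun j hj => by simp only [Pi.neg_apply]; linarith [hf j hj]
  simpa using this

theorem sub_le_sub_of_reflected_increment_le {f g : ℕ → α} {n : ℕ}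
    (h : ∀ j, 1 ≤ j → j ≤ n → g (n - j + 1) - g (n - j) ≤ f j - f (j - 1)) :
    g n - g 0 ≤ f n - f 0 := by
  suffices ∀ m ≤ n, g n - g (n - m) ≤ f m - f 0 by simpa using this n le_rfl
  intro m hm
  induction m with
  | zero => simp
  | succ m ih =>
    have step := h (m + 1) (by omega) hm
    rw [show n - (m + 1) + 1 = n - m by omega, Nat.add_sub_cancel] at step
    linarith [ih (by omega)]

end Sequences

theorem ZExt_zero (v : ℕ → ℝ) : ZExt v 0 = 0 := rfl

theorem ZExt_of_ne_zero (v : ℕ → ℝ) {k : ℕ} (hk : k ≠ 0) : ZExt v k = v k := if_neg hk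

namespace ValidUL

variable {T : ℕ} {u l : ℕ → ℝ}

theorem card_mul_le (h : ValidUL T u l) {k : ℕ} (hk : 1 ≤ k) (hkT : k ≤ T) :
    k * u T ≤ T * u k := by
  obtain ⟨hconc, -⟩ := h
  have := card_mul_le_mul_of_concave hkT (ZExt_zero u)
    fun j hj => by simpa using hconc (j + 1) (by omega) (by omega)
  rwa [ZExt_of_ne_zero u (by omega : T ≠ 0), ZExt_of_ne_zero u (by omega : k ≠ 0)] at this

theorem mul_le_card_mul (h : ValidUL T u l) {k : ℕ} (hk : 1 ≤ k) (hkT : k ≤ T) :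
    T * l k ≤ k * u T := by
  obtain ⟨-, -, -, hconv, -, -, hcross⟩ := h
  have hT : T ≠ 0 := by omega
  have hkl := mul_le_card_mul_of_convex hkT (ZExt_zero l)
    fun j hj => by simpa using hconv (j + 1) (by omega) (by omega)
  have hlu := sub_le_sub_of_reflected_increment_le hcross
  rw [ZExt_of_ne_zero l hT, ZExt_of_ne_zero l (by omega : k ≠ 0)] at hkl
  rw [ZExt_of_ne_zero l hT, ZExt_of_ne_zero u hT, ZExt_zero, ZExt_zero] at hlu
  calc (T : ℝ) * l k ≤ k * l T := hkl
    _ ≤ k * u T := by gcongr; linarith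

end ValidUL

theorem const_mem_ULset_general (T : ℕ) (Δt : ℝ) (hΔt : 0 < Δt) (u l : ℕ → ℝ)
    (hvalid : ValidUL T u l) :
    ((fun _ : Fin T => u T / (T * Δt)) ∈ ULset T Δt u l) ∧
      (ULset T Δt u l).Nonempty := by
  have hmem : (fun _ : Fin T => u T / (T * Δt)) ∈ ULset T Δt u l := by
    intro S hS
    have hk : 1 ≤ S.card := card_pos.mpr hS
    have hkT : S.card ≤ T := by simpa using card_le_univ S
    have hT : (0 : ℝ) < T := by exact_mod_cast hk.trans hkT
    have hsum : Δt * ∑ _t ∈ S, u T / (T * Δt) = S.card * u T / T := by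
      rw [sum_const, nsmul_eq_mul]
      field_simp
    rw [hsum, le_div_iff₀ hT, div_le_iff₀ hT]
    exact ⟨by linarith [hvalid.mul_le_card_mul hk hkT], by linarith [hvalid.card_mul_le hk hkT]⟩
  exact ⟨hmem, _, hmem⟩

/-- For valid UL-parameters, the constant signal `c = u T / (T·Δt)`
satisfies all subset-sum constraints; in particular `F(u,l)` is nonempty. -/
theorem const_mem_ULset (T : ℕ) (hT : 1 ≤ T) (Δt : ℝ) (hΔt : 0 < Δt) (u l : ℕ → ℝ)
    (hvalid : ValidUL T u l) :
    ((fun _ : Fin T => u T / (T * Δt)) ∈ ULset T Δt u l) ∧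
      (ULset T Δt u l).Nonempty :=
  const_mem_ULset_general T Δt hΔt u l hvalid
end
end

section
/- A vector p ∈ ℝ^T with nonnegative entries belongs to the UL-flexibility set F(u,l) if and only if its descending rearrangement p̃ satisfies Δt·∑_{j=1}^k p̃_j ≤ u_k and Δt·∑_{j=T-k+1}^T p̃_j ≥ l_k for all k ∈ {1,...,T}. -/
open Finset

noncomputable section

lemma sm_le {k T : ℕ} (g : Fin k → Fin T) (hg : StrictMono g) :
    ∀ i : Fin k, (i : ℕ) ≤ (g i : ℕ) := by
  rintro ⟨n, hn⟩
  induction n with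
  | zero => exact Nat.zero_le _
  | succ m ih =>
    have hm : m < k := by omega
    have h1 : (⟨m, hm⟩ : Fin k) < ⟨m+1, hn⟩ := by simp [Fin.lt_def]
    have h2 := hg h1
    have h3 := ih hm
    rw [Fin.lt_def] at h2
    simp only [Fin.val_mk] at h2 h3 ⊢
    omega

lemma sm_ge {k T : ℕ} (g : Fin k → Fin T) (hg : StrictMono g) :
    ∀ i : Fin k, (g i : ℕ) ≤ T - k + i := by
  intro j
  have hmono : StrictMono (fun i : Fin k => (g i.rev).rev) := by
    intro a b hab
    exact Fin.rev_lt_rev.mpr (hg (Fin.rev_lt_rev.mpr hab))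
  have h1 := sm_le _ hmono j.rev
  simp only [Fin.rev_rev] at h1
  have h2 : (j.rev : ℕ) = k - 1 - j := by simp [Fin.val_rev]; omega
  have h3 : ((g j).rev : ℕ) = T - 1 - (g j) := by simp [Fin.val_rev]; omega
  have h4 := (g j).isLt
  have h5 := j.isLt
  omega

lemma sum_le_topk {T k : ℕ} (hk : k ≤ T) (q : Fin T → ℝ) (hq : Antitone q)
    (A : Finset (Fin T)) (hA : A.card = k) :
    ∑ j ∈ A, q j ≤ ∑ j ∈ univ.filter (fun j : Fin T => (j:ℕ) < k), q j := by
  set e := A.orderIsoOfFin hA with he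
  have hgm : StrictMono (fun i : Fin k => (e i : Fin T)) := fun a b hab =>
    Subtype.coe_lt_coe.mpr (e.strictMono hab)
  have h1 : ∑ j ∈ A, q j = ∑ i : Fin k, q (e i) := by
    rw [← Finset.sum_attach A (fun j => q j)]
    exact (Equiv.sum_comp e.toEquiv (fun x : A => q x)).symm
  have h2 : univ.filter (fun j : Fin T => (j:ℕ) < k)
      = Finset.image (Fin.castLE hk) univ := by
    ext j
    simp only [mem_filter, mem_univ, true_and, mem_image]
    constructor
    · intro hj; exact ⟨⟨j, hj⟩, rfl⟩
    · rintro ⟨i, rfl⟩; exact i.isLt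
  have h3 : ∑ j ∈ univ.filter (fun j : Fin T => (j:ℕ) < k), q j
      = ∑ i : Fin k, q (Fin.castLE hk i) := by
    rw [h2, Finset.sum_image (by intro a _ b _ h; exact Fin.castLE_injective hk h)]
  rw [h1, h3]
  apply Finset.sum_le_sum
  intro i _
  apply hq
  rw [Fin.le_def]
  exact sm_le _ hgm i

lemma botk_le_sum {T k : ℕ} (hk : k ≤ T) (q : Fin T → ℝ) (hq : Antitone q)
    (A : Finset (Fin T)) (hA : A.card = k) :
    ∑ j ∈ univ.filter (fun j : Fin T => T - k ≤ (j:ℕ)), q j ≤ ∑ j ∈ A, q j := by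
  set e := A.orderIsoOfFin hA with he
  have hgm : StrictMono (fun i : Fin k => (e i : Fin T)) := fun a b hab =>
    Subtype.coe_lt_coe.mpr (e.strictMono hab)
  have h1 : ∑ j ∈ A, q j = ∑ i : Fin k, q (e i) := by
    rw [← Finset.sum_attach A (fun j => q j)]
    exact (Equiv.sum_comp e.toEquiv (fun x : A => q x)).symm
  have hf : ∀ i : Fin k, T - k + (i:ℕ) < T := by intro i; have := i.isLt; omega
  have h2 : univ.filter (fun j : Fin T => T - k ≤ (j:ℕ))
      = Finset.image (fun i : Fin k => (⟨T - k + i, hf i⟩ : Fin T)) univ := by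
    ext j
    simp only [mem_filter, mem_univ, true_and, mem_image]
    constructor
    · intro hj
      have hj2 := j.isLt
      refine ⟨⟨(j:ℕ) - (T - k), by omega⟩, ?_⟩
      ext; simp; omega
    · rintro ⟨i, rfl⟩; simp
  have h3 : ∑ j ∈ univ.filter (fun j : Fin T => T - k ≤ (j:ℕ)), q j
      = ∑ i : Fin k, q ⟨T - k + i, hf i⟩ := by
    rw [h2, Finset.sum_image]
    intro a _ b _ h
    rw [Fin.mk.injEq] at h
    exact Fin.ext (by omega)
  rw [h1, h3]
  apply Finset.sum_le_sum
  intro i _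
  apply hq
  rw [Fin.le_def]
  exact sm_ge _ hgm i

lemma card_filter_lt {T k : ℕ} (hk : k ≤ T) :
    (univ.filter (fun j : Fin T => (j:ℕ) < k)).card = k := by
  have h2 : univ.filter (fun j : Fin T => (j:ℕ) < k)
      = Finset.image (Fin.castLE hk) univ := by
    ext j
    simp only [mem_filter, mem_univ, true_and, mem_image]
    constructor
    · intro hj; exact ⟨⟨j, hj⟩, rfl⟩
    · rintro ⟨i, rfl⟩; exact i.isLt
  rw [h2, Finset.card_image_of_injective _ (Fin.castLE_injective hk), card_univ,
    Fintype.card_fin]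

lemma card_filter_ge {T k : ℕ} (hk : k ≤ T) :
    (univ.filter (fun j : Fin T => T - k ≤ (j:ℕ))).card = k := by
  have hf : ∀ i : Fin k, T - k + (i:ℕ) < T := by intro i; have := i.isLt; omega
  have h2 : univ.filter (fun j : Fin T => T - k ≤ (j:ℕ))
      = Finset.image (fun i : Fin k => (⟨T - k + i, hf i⟩ : Fin T)) univ := by
    ext j
    simp only [mem_filter, mem_univ, true_and, mem_image]
    constructor
    · intro hj
      have hj2 := j.isLt
      refine ⟨⟨(j:ℕ) - (T - k), by omega⟩, ?_⟩
      ext; simp; omega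
    · rintro ⟨i, rfl⟩; simp
  rw [h2, Finset.card_image_of_injective _ (fun a b h => by
      rw [Fin.mk.injEq] at h; exact Fin.ext (by omega)), card_univ, Fintype.card_fin]

/-- A nonnegative `p` belongs to `F(u,l)` iff its descending
rearrangement `p̃ = p ∘ σ` satisfies `Δt·∑_{j=1}^k p̃_j ≤ u k` and
`Δt·∑_{j=T-k+1}^T p̃_j ≥ l k` for all `k ∈ {1,…,T}`. -/
theorem ULset_mem_iff_ordered (T : ℕ) (hT : 1 ≤ T) (Δt : ℝ) (hΔt : 0 < Δt)
    (u l : ℕ → ℝ) (p : Fin T → ℝ) (hp : ∀ t, 0 ≤ p t)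
    (σ : Equiv.Perm (Fin T)) (hσ : Antitone (p ∘ σ)) :
    p ∈ ULset T Δt u l ↔
      ∀ k, 1 ≤ k → k ≤ T →
        Δt * ∑ j ∈ Finset.univ.filter (fun j : Fin T => (j : ℕ) < k), p (σ j) ≤ u k ∧
        l k ≤ Δt * ∑ j ∈ Finset.univ.filter (fun j : Fin T => T - k ≤ (j : ℕ)), p (σ j) := by
  constructor
  · intro h k hk1 hk2
    constructor
    · set B := univ.filter (fun j : Fin T => (j:ℕ) < k) with hB
      have hcard : (Finset.image σ B).card = k := by
        rw [Finset.card_image_of_injective _ σ.injective, hB, card_filter_lt hk2]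
      have hne : (Finset.image σ B).Nonempty := by
        rw [← Finset.card_pos, hcard]; omega
      have := (h _ hne).2
      rw [hcard] at this
      rw [Finset.sum_image (fun a _ b _ hab => σ.injective hab)] at this
      exact this
    · set B := univ.filter (fun j : Fin T => T - k ≤ (j:ℕ)) with hB
      have hcard : (Finset.image σ B).card = k := by
        rw [Finset.card_image_of_injective _ σ.injective, hB, card_filter_ge hk2]
      have hne : (Finset.image σ B).Nonempty := by
        rw [← Finset.card_pos, hcard]; omega
      have := (h _ hne).1
      rw [hcard] at this
      rw [Finset.sum_image (fun a _ b _ hab => σ.injective hab)] at this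
      exact this
  · intro H S hS
    set k := S.card with hk
    have hk1 : 1 ≤ k := Finset.card_pos.mpr hS
    have hk2 : k ≤ T := by
      simpa [Fintype.card_fin] using Finset.card_le_univ S
    set B := Finset.image σ.symm S with hB
    have hBcard : B.card = k := by
      rw [hB, Finset.card_image_of_injective _ σ.symm.injective]
    have hsum : ∑ t ∈ S, p t = ∑ j ∈ B, p (σ j) := by
      rw [hB, Finset.sum_image (fun a _ b _ hab => σ.symm.injective hab)]
      exact Finset.sum_congr rfl (fun t _ => by rw [Equiv.apply_symm_apply])
    obtain ⟨H1, H2⟩ := H k hk1 hk2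
    constructor
    · refine le_trans H2 ?_
      rw [hsum]
      exact mul_le_mul_of_nonneg_left (botk_le_sum hk2 (p ∘ σ) hσ B hBcard) hΔt.le
    · refine le_trans ?_ H1
      rw [hsum]
      exact mul_le_mul_of_nonneg_left (sum_le_topk hk2 (p ∘ σ) hσ B hBcard) hΔt.le
end
end

section
/- For valid UL-parameters (u,l) and each k ∈ {0,...,T}, the vertex candidate p^(k) defined by p^(k)_t = (u_t − u_{t−1})/Δt for t ≤ k and p^(k)_t = (l_{T−t+1} − l_{T−t})/Δt for t > k (with u_0 = l_0 = 0) is a nonnegative, non-increasing vector. -/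
open Finset

noncomputable section

/-- For valid UL-parameters, each vertex candidate `p^(k)`
(`k ∈ {0,…,T}`) is nonnegative and non-increasing. -/
theorem ULvertex_nonneg_antitone (T : ℕ) (hT : 1 ≤ T) (Δt : ℝ) (hΔt : 0 < Δt)
    (u l : ℕ → ℝ) (hvalid : ValidUL T u l) (k : ℕ) (hk : k ≤ T) :
    (∀ t, 0 ≤ ULvertex T Δt u l k t) ∧ Antitone (ULvertex T Δt u l k) := by
  obtain ⟨hconc, hupos, huinc, hconv, hlpos, hlinc, hul⟩ := hvalid
  set f := ULvertex T Δt u l k with hf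
  have hnn : ∀ t, 0 ≤ f t := by
    intro t
    rw [hf, ULvertex]
    split
    · apply div_nonneg _ hΔt.le
      have h2 := huinc (t : ℕ) (by have := t.2; omega)
      linarith
    · apply div_nonneg _ hΔt.le
      have ht := t.2
      have h2 := hlinc (T - (t : ℕ) - 1) (by omega)
      have he : T - (t : ℕ) - 1 + 1 = T - (t : ℕ) := by omega
      rw [he] at h2
      linarith
  refine ⟨hnn, ?_⟩
  -- adjacent step inequality
  have hstep : ∀ (i : ℕ) (h1 : i + 1 < T),
      f ⟨i + 1, h1⟩ ≤ f ⟨i, by omega⟩ := by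
    intro i h1
    simp only [hf, ULvertex]
    have hconvl : ZExt l (T - (i+1)) - ZExt l (T - (i+1) - 1)
        ≤ ZExt l (T - i) - ZExt l (T - i - 1) := by
      have hc := hconv (T - i - 1) (by omega) (by omega)
      have e1 : T - i - 1 - 1 = T - (i+1) - 1 := by omega
      have e2 : T - i - 1 + 1 = T - i := by omega
      have e3 : T - (i+1) = T - i - 1 := by omega
      rw [e2] at hc
      rw [← e1, e3]
      linarith
    by_cases hik : i < k
    · by_cases hik2 : i + 1 < k
      · rw [if_pos hik2, if_pos hik]
        rw [div_le_div_iff_of_pos_right hΔt]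
        have hc := hconc (i + 1) (by omega) (by omega)
        have e : i + 1 - 1 = i := by omega
        rw [e] at hc
        linarith
      · -- i+1 = k
        rw [if_neg hik2, if_pos hik]
        rw [div_le_div_iff_of_pos_right hΔt]
        have h7 := hul (i + 1) (by omega) (by omega)
        have e : i + 1 - 1 = i := by omega
        have e2 : T - (i+1) + 1 = T - i := by omega
        have e3 : T - (i+1) = T - i - 1 := by omega
        rw [e, e2, e3] at h7
        rw [e3] at hconvl
        rw [e3]
        linarith
    · rw [if_neg (by omega : ¬ i + 1 < k), if_neg hik]
      rw [div_le_div_iff_of_pos_right hΔt]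
      exact hconvl
  -- from adjacent steps to antitone
  intro a b hab
  have key : ∀ n : ℕ, ∀ (hn : n < T), (a : ℕ) ≤ n → f ⟨n, hn⟩ ≤ f a := by
    intro n
    induction n with
    | zero => intro hn h0
              have : a = ⟨0, hn⟩ := by
                apply Fin.ext; simp only [Fin.val_mk]; omega
              rw [this]
    | succ m ih =>
        intro hn hle
        rcases Nat.lt_or_ge (a : ℕ) (m + 1) with h | h
        · calc f ⟨m + 1, hn⟩ ≤ f ⟨m, by omega⟩ := hstep m hn
            _ ≤ f a := ih (by omega) (by omega)
        · have : a = ⟨m + 1, hn⟩ := by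
            apply Fin.ext; simp only [Fin.val_mk]; omega
          rw [this]
  have : b = (⟨(b : ℕ), b.2⟩ : Fin T) := by apply Fin.ext; rfl
  rw [this]
  exact key (b : ℕ) b.2 hab
end
end

section
/- For an EV with parameters 0 ≤ p̲ ≤ p̄ and p̲·T·Δt ≤ e̲ ≤ ē ≤ p̄·T·Δt, define u_k = min(k·p̄·Δt, ē − (T−k)·p̲·Δt) and l_k = max(k·p̲·Δt, e̲ − (T−k)·p̄·Δt) for k ∈ {1,...,T}. Then the zero-extension of u is concave, nonnegative and increasing, and the zero-extension of l is convex, nonnegative and increasing. -/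
open Finset

noncomputable section

/-- Upper UL-parameter of an EV: `u_k = min(k·p̄·Δt, ē − (T−k)·p̲·Δt)`. -/
def uEV (T : ℕ) (Δt plo phi ebar : ℝ) (k : ℕ) : ℝ :=
  min ((k : ℝ) * phi * Δt) (ebar - ((T : ℝ) - (k : ℝ)) * plo * Δt)

/-- Lower UL-parameter of an EV: `l_k = max(k·p̲·Δt, e̲ − (T−k)·p̄·Δt)`. -/
def lEV (T : ℕ) (Δt plo phi elo : ℝ) (k : ℕ) : ℝ :=
  max ((k : ℝ) * plo * Δt) (elo - ((T : ℝ) - (k : ℝ)) * phi * Δt)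

/-- For EV parameters `0 ≤ p̲ ≤ p̄`, `T·p̲·Δt ≤ e̲ ≤ ē ≤ T·p̄·Δt`,
the zero-extension of `u` is concave, nonnegative and increasing, and the
zero-extension of `l` is convex, nonnegative and increasing. -/
theorem EV_UL_valid_shape (T : ℕ) (hT : 1 ≤ T) (Δt : ℝ) (hΔt : 0 < Δt)
    (plo phi elo ebar : ℝ) (hp0 : 0 ≤ plo) (hpp : plo ≤ phi)
    (he1 : (T : ℝ) * plo * Δt ≤ elo) (he2 : elo ≤ ebar)
    (he3 : ebar ≤ (T : ℝ) * phi * Δt) :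
    (∀ j, 1 ≤ j → j + 1 ≤ T →
      ZExt (uEV T Δt plo phi ebar) (j - 1) + ZExt (uEV T Δt plo phi ebar) (j + 1)
        ≤ 2 * ZExt (uEV T Δt plo phi ebar) j) ∧
    (∀ k, k ≤ T → 0 ≤ ZExt (uEV T Δt plo phi ebar) k) ∧
    (∀ j, j + 1 ≤ T →
      ZExt (uEV T Δt plo phi ebar) j ≤ ZExt (uEV T Δt plo phi ebar) (j + 1)) ∧
    (∀ j, 1 ≤ j → j + 1 ≤ T →
      2 * ZExt (lEV T Δt plo phi elo) j
        ≤ ZExt (lEV T Δt plo phi elo) (j - 1) + ZExt (lEV T Δt plo phi elo) (j + 1)) ∧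
    (∀ k, k ≤ T → 0 ≤ ZExt (lEV T Δt plo phi elo) k) ∧
    (∀ j, j + 1 ≤ T →
      ZExt (lEV T Δt plo phi elo) j ≤ ZExt (lEV T Δt plo phi elo) (j + 1)) := by
  have hphi : (0:ℝ) ≤ phi := le_trans hp0 hpp
  have hdt : (0:ℝ) ≤ Δt := le_of_lt hΔt
  have hu0 : uEV T Δt plo phi ebar 0 = 0 := by
    have h1 : (0:ℝ) ≤ ebar - ((T:ℝ) - (0:ℕ)) * plo * Δt := by
      push_cast; nlinarith
    simp [uEV]
    push_cast at h1 ⊢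
    have : min ((0:ℝ)) (ebar - (T:ℝ) * plo * Δt) = 0 := by
      rw [min_eq_left]; linarith
    simpa using this
  have hl0 : lEV T Δt plo phi elo 0 = 0 := by
    have h1 : elo - (T:ℝ) * phi * Δt ≤ 0 := by nlinarith
    simp [lEV]
    have : max ((0:ℝ)) (elo - (T:ℝ) * phi * Δt) = 0 := by
      rw [max_eq_left]; linarith
    simpa using this
  have hzu : ∀ k, ZExt (uEV T Δt plo phi ebar) k = uEV T Δt plo phi ebar k := by
    intro k
    rcases Nat.eq_zero_or_pos k with h|h
    · subst h; simpa [ZExt] using hu0.symm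
    · simp [ZExt, Nat.pos_iff_ne_zero.mp h]
  have hzl : ∀ k, ZExt (lEV T Δt plo phi elo) k = lEV T Δt plo phi elo k := by
    intro k
    rcases Nat.eq_zero_or_pos k with h|h
    · subst h; simpa [ZExt] using hl0.symm
    · simp [ZExt, Nat.pos_iff_ne_zero.mp h]
  refine ⟨?_, ?_, ?_, ?_, ?_, ?_⟩
  · intro j hj hjT
    rw [hzu, hzu, hzu]
    unfold uEV
    have hc : ((j - 1 : ℕ) : ℝ) = (j:ℝ) - 1 := by
      push_cast [Nat.cast_sub hj]; ring
    rw [hc]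
    push_cast
    rcases le_total ((j:ℝ) * phi * Δt) (ebar - ((T:ℝ) - (j:ℝ)) * plo * Δt) with h|h
    · rw [min_eq_left h]
      have h1 := min_le_left (((j:ℝ) - 1) * phi * Δt) (ebar - ((T:ℝ) - ((j:ℝ)-1)) * plo * Δt)
      have h2 := min_le_left (((j:ℝ) + 1) * phi * Δt) (ebar - ((T:ℝ) - ((j:ℝ)+1)) * plo * Δt)
      nlinarith
    · rw [min_eq_right h]
      have h1 := min_le_right (((j:ℝ) - 1) * phi * Δt) (ebar - ((T:ℝ) - ((j:ℝ)-1)) * plo * Δt)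
      have h2 := min_le_right (((j:ℝ) + 1) * phi * Δt) (ebar - ((T:ℝ) - ((j:ℝ)+1)) * plo * Δt)
      nlinarith
  · intro k hk
    rw [hzu]
    unfold uEV
    have hk' : (k:ℝ) ≤ (T:ℝ) := by exact_mod_cast hk
    apply le_min
    · positivity
    · nlinarith [mul_nonneg (mul_nonneg (Nat.cast_nonneg k : (0:ℝ) ≤ (k:ℝ)) hp0) hdt]
  · intro j hjT
    rw [hzu, hzu]
    unfold uEV
    push_cast
    apply le_min
    · exact (min_le_left _ _).trans (by nlinarith)
    · exact (min_le_right _ _).trans (by nlinarith)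
  · intro j hj hjT
    rw [hzl, hzl, hzl]
    unfold lEV
    have hc : ((j - 1 : ℕ) : ℝ) = (j:ℝ) - 1 := by
      push_cast [Nat.cast_sub hj]; ring
    rw [hc]
    push_cast
    rcases le_total ((j:ℝ) * plo * Δt) (elo - ((T:ℝ) - (j:ℝ)) * phi * Δt) with h|h
    · rw [max_eq_right h]
      have h1 := le_max_right (((j:ℝ) - 1) * plo * Δt) (elo - ((T:ℝ) - ((j:ℝ)-1)) * phi * Δt)
      have h2 := le_max_right (((j:ℝ) + 1) * plo * Δt) (elo - ((T:ℝ) - ((j:ℝ)+1)) * phi * Δt)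
      nlinarith
    · rw [max_eq_left h]
      have h1 := le_max_left (((j:ℝ) - 1) * plo * Δt) (elo - ((T:ℝ) - ((j:ℝ)-1)) * phi * Δt)
      have h2 := le_max_left (((j:ℝ) + 1) * plo * Δt) (elo - ((T:ℝ) - ((j:ℝ)+1)) * phi * Δt)
      nlinarith
  · intro k hk
    rw [hzl]
    unfold lEV
    exact le_max_of_le_left (by positivity)
  · intro j hjT
    rw [hzl, hzl]
    unfold lEV
    push_cast
    apply max_le
    · exact (by nlinarith : (j:ℝ) * plo * Δt ≤ ((j:ℝ)+1) * plo * Δt).trans (le_max_left _ _)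
    · exact (by nlinarith : elo - ((T:ℝ) - (j:ℝ)) * phi * Δt ≤ elo - ((T:ℝ) - ((j:ℝ)+1)) * phi * Δt).trans (le_max_right _ _)
end
end

section
/- With u_k = min(k·p̄·Δt, ē − (T−k)·p̲·Δt) and l_k = max(k·p̲·Δt, e̲ − (T−k)·p̄·Δt), the coupling property holds: u_j − u_{j−1} ≥ l_{T−j+1} − l_{T−j} for all j ∈ {1,...,T} (with u_0 = l_0 = 0); equivalently u is determined by u_k = min(k·p̄·Δt, u_T − l_{T−k}). -/
open Finset

noncomputable section

lemma key_minmax (a0 a1 b0 b1 c0 c1 d0 d1 P Q : ℝ)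
    (ha : a1 - a0 = Q) (hb : b1 - b0 = P) (hc : c1 - c0 = P) (hd : d1 - d0 = Q)
    (hPQ : P ≤ Q) (hbd : d1 - c0 ≤ b1 - a0) :
    max c1 d1 - max c0 d0 ≤ min a1 b1 - min a0 b0 := by
  have m1 := min_le_left a0 b0
  have m2 := min_le_right a0 b0
  have m3 := le_max_left c0 d0
  have m4 := le_max_right c0 d0
  rcases max_cases c1 d1 with ⟨hx, _⟩ | ⟨hx, _⟩ <;>
    rcases min_cases a1 b1 with ⟨hy, _⟩ | ⟨hy, _⟩ <;> rw [hx, hy] <;> linarith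

/-- Coupling property of the EV UL-parameters:
`u_j − u_{j−1} ≥ l_{T−j+1} − l_{T−j}` for all `j ∈ {1,…,T}` (with `u_0 = l_0 = 0`);
equivalently `u_k = min(k·p̄·Δt, u_T − l_{T−k})`. -/
theorem EV_UL_coupling (T : ℕ) (hT : 1 ≤ T) (Δt : ℝ) (hΔt : 0 < Δt)
    (plo phi elo ebar : ℝ) (hp0 : 0 ≤ plo) (hpp : plo ≤ phi)
    (he1 : (T : ℝ) * plo * Δt ≤ elo) (he2 : elo ≤ ebar)
    (he3 : ebar ≤ (T : ℝ) * phi * Δt) :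
    (∀ j, 1 ≤ j → j ≤ T →
      ZExt (lEV T Δt plo phi elo) (T - j + 1) - ZExt (lEV T Δt plo phi elo) (T - j)
        ≤ ZExt (uEV T Δt plo phi ebar) j - ZExt (uEV T Δt plo phi ebar) (j - 1)) ∧
    (∀ k, 1 ≤ k → k ≤ T →
      uEV T Δt plo phi ebar k
        = min ((k : ℝ) * phi * Δt)
            (uEV T Δt plo phi ebar T - ZExt (lEV T Δt plo phi elo) (T - k)))  := by
  have hu0 : uEV T Δt plo phi ebar 0 = 0 := by
    simp only [uEV, Nat.cast_zero, zero_mul, sub_zero]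
    exact min_eq_left (by nlinarith)
  have hl0 : lEV T Δt plo phi elo 0 = 0 := by
    simp only [lEV, Nat.cast_zero, zero_mul, sub_zero]
    exact max_eq_left (by nlinarith)
  have hZu : ∀ k, ZExt (uEV T Δt plo phi ebar) k = uEV T Δt plo phi ebar k := by
    intro k
    rcases eq_or_ne k 0 with rfl | h
    · simp [ZExt, hu0]
    · simp [ZExt, h]
  have hZl : ∀ k, ZExt (lEV T Δt plo phi elo) k = lEV T Δt plo phi elo k := by
    intro k
    rcases eq_or_ne k 0 with rfl | h
    · simp [ZExt, hl0]
    · simp [ZExt, h]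
  have hQ : plo * Δt ≤ phi * Δt := by nlinarith
  constructor
  · intro j hj1 hjT
    have hc1 : ((T - j : ℕ) : ℝ) = (T : ℝ) - (j : ℝ) := by
      rw [Nat.cast_sub hjT]
    have hc2 : ((j - 1 : ℕ) : ℝ) = (j : ℝ) - 1 := by
      rw [Nat.cast_sub hj1]; norm_num
    rw [hZl, hZl, hZu, hZu]
    simp only [uEV, lEV]
    apply key_minmax _ _ _ _ _ _ _ _ (plo * Δt) (phi * Δt)
    · push_cast [hc1, hc2]; ring
    · push_cast [hc1, hc2]; ring
    · push_cast [hc1, hc2]; ring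
    · push_cast [hc1, hc2]; ring
    · exact hQ
    · push_cast [hc1, hc2]; nlinarith [he2]
  · intro k hk1 hkT
    have hc1 : ((T - k : ℕ) : ℝ) = (T : ℝ) - (k : ℝ) := by
      rw [Nat.cast_sub hkT]
    rw [hZl]
    have huT : uEV T Δt plo phi ebar T = ebar := by
      simp only [uEV, sub_self, zero_mul, sub_zero]
      exact min_eq_right he3
    rw [huT]
    simp only [uEV, lEV, hc1]
    have h1 : (T : ℝ) - ((T : ℝ) - (k : ℝ)) = (k : ℝ) := by ring
    rw [h1]
    rw [← min_sub_sub_left]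
    have h2 : (k : ℝ) * phi * Δt ≤ ebar - (elo - (k : ℝ) * phi * Δt) := by linarith
    rw [← min_assoc]
    exact (min_eq_left (le_trans (min_le_left _ _) h2)).symm
end
end

section
/- The feasible set of an EV equals its UL-flexibility set: {p ∈ ℝ^T : p̲ ≤ p_t ≤ p̄ for all t, and e̲ ≤ Δt·∑_t p_t ≤ ē} = F(u,l) where u_k = min(k·p̄·Δt, ē − (T−k)·p̲·Δt) and l_k = max(k·p̲·Δt, e̲ − (T−k)·p̄·Δt). -/
open Finset

noncomputable section

/-- The feasible set of an EV equals its UL-flexibility set. -/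
theorem EV_feasible_eq_ULset (T : ℕ) (hT : 1 ≤ T) (Δt : ℝ) (hΔt : 0 < Δt)
    (plo phi elo ebar : ℝ) (hp0 : 0 ≤ plo) (hpp : plo ≤ phi)
    (he1 : (T : ℝ) * plo * Δt ≤ elo) (he2 : elo ≤ ebar)
    (he3 : ebar ≤ (T : ℝ) * phi * Δt) :
    {p : Fin T → ℝ | (∀ t, plo ≤ p t ∧ p t ≤ phi) ∧
        elo ≤ Δt * ∑ t, p t ∧ Δt * ∑ t, p t ≤ ebar}
      = ULset T Δt (uEV T Δt plo phi ebar) (lEV T Δt plo phi elo) := by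
  ext p
  simp only [Set.mem_setOf_eq, ULset, uEV, lEV]
  constructor
  · rintro ⟨hb, h1, h2⟩ S _
    have hcard : (S.card : ℝ) ≤ (T : ℝ) := by
      exact_mod_cast S.card_le_univ.trans_eq (by simp)
    have hcompl : ((Sᶜ : Finset (Fin T)).card : ℝ) = (T : ℝ) - S.card := by
      have := Finset.card_compl S
      rw [this]
      have : S.card ≤ Fintype.card (Fin T) := S.card_le_univ.trans_eq (by simp)
      push_cast [Nat.cast_sub this]
      simp
    have hsplit : Δt * ∑ t ∈ S, p t
        = Δt * ∑ t, p t - Δt * ∑ t ∈ Sᶜ, p t := by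
      rw [← Finset.sum_add_sum_compl S p]; ring
    have hSlo : (S.card : ℝ) * plo ≤ ∑ t ∈ S, p t := by
      calc (S.card : ℝ) * plo = ∑ _t ∈ S, plo := by rw [Finset.sum_const, nsmul_eq_mul]
        _ ≤ ∑ t ∈ S, p t := Finset.sum_le_sum fun t _ => (hb t).1
    have hShi : ∑ t ∈ S, p t ≤ (S.card : ℝ) * phi := by
      calc ∑ t ∈ S, p t ≤ ∑ _t ∈ S, phi := Finset.sum_le_sum fun t _ => (hb t).2
        _ = (S.card : ℝ) * phi := by rw [Finset.sum_const, nsmul_eq_mul]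
    have hClo : ((T : ℝ) - S.card) * plo ≤ ∑ t ∈ Sᶜ, p t := by
      calc ((T : ℝ) - S.card) * plo = ∑ _t ∈ Sᶜ, plo := by
            rw [Finset.sum_const, nsmul_eq_mul, hcompl]
        _ ≤ _ := Finset.sum_le_sum fun t _ => (hb t).1
    have hChi : ∑ t ∈ Sᶜ, p t ≤ ((T : ℝ) - S.card) * phi := by
      calc ∑ t ∈ Sᶜ, p t ≤ ∑ _t ∈ Sᶜ, phi := Finset.sum_le_sum fun t _ => (hb t).2
        _ = _ := by rw [Finset.sum_const, nsmul_eq_mul, hcompl]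
    constructor
    · apply max_le
      · nlinarith
      · rw [hsplit]; nlinarith
    · apply le_min
      · nlinarith
      · rw [hsplit]; nlinarith
  · intro h
    have hone : ∀ t : Fin T, plo ≤ p t ∧ p t ≤ phi := by
      intro t
      have := h {t} ⟨t, Finset.mem_singleton_self t⟩
      simp only [Finset.card_singleton, Nat.cast_one, Finset.sum_singleton, one_mul] at this
      obtain ⟨hl, hu⟩ := this
      have hl' : plo * Δt ≤ Δt * p t := le_trans (le_max_left _ _) hl
      have hu' : Δt * p t ≤ phi * Δt := le_trans hu (min_le_left _ _)
      constructor
      · nlinarith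
      · nlinarith
    refine ⟨hone, ?_, ?_⟩
    · have := (h Finset.univ (Finset.univ_nonempty_iff.mpr ⟨⟨0, hT⟩⟩)).1
      simp only [Finset.card_univ, Fintype.card_fin] at this
      have hle : elo ≤ max ((T : ℝ) * plo * Δt) (elo - ((T : ℝ) - (T : ℝ)) * phi * Δt) := by
        apply le_trans _ (le_max_right _ _)
        simp
      linarith
    · have := (h Finset.univ (Finset.univ_nonempty_iff.mpr ⟨⟨0, hT⟩⟩)).2
      simp only [Finset.card_univ, Fintype.card_fin] at this
      have hle : min ((T : ℝ) * phi * Δt) (ebar - ((T : ℝ) - (T : ℝ)) * plo * Δt) ≤ ebar := by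
        apply le_trans (min_le_right _ _)
        simp
      linarith
end
end

section
/- If p satisfies the individual EV constraints p̲ ≤ p_t ≤ p̄ for all t and e̲ ≤ Δt·∑_{t=1}^T p_t ≤ ē, then for every k-element subset S ⊆ {1,...,T}: Δt·∑_{t∈S} p_t ≤ min(k·p̄·Δt, ē − (T−k)·p̲·Δt) and Δt·∑_{t∈S} p_t ≥ max(k·p̲·Δt, e̲ − (T−k)·p̄·Δt). -/
open Finset

noncomputable section

/-- If `p` satisfies the individual EV constraints, then every
`k`-subset sum satisfies the UL bounds. -/
theorem EV_subset_sum_bounds (T : ℕ) (hT : 1 ≤ T) (Δt : ℝ) (hΔt : 0 < Δt)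
    (plo phi elo ebar : ℝ) (hp0 : 0 ≤ plo) (hpp : plo ≤ phi)
    (p : Fin T → ℝ) (hplim : ∀ t, plo ≤ p t ∧ p t ≤ phi)
    (helim : elo ≤ Δt * ∑ t, p t ∧ Δt * ∑ t, p t ≤ ebar)
    (k : ℕ) (hk1 : 1 ≤ k) (hkT : k ≤ T)
    (S : Finset (Fin T)) (hS : S.card = k) :
    Δt * ∑ t ∈ S, p t ≤ min ((k : ℝ) * phi * Δt) (ebar - ((T : ℝ) - (k : ℝ)) * plo * Δt) ∧
    max ((k : ℝ) * plo * Δt) (elo - ((T : ℝ) - (k : ℝ)) * phi * Δt) ≤ Δt * ∑ t ∈ S, p t := by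
  have hcard : (Sᶜ : Finset (Fin T)).card = T - k := by
    rw [Finset.card_compl, hS, Fintype.card_fin]
  have hsplit : ∑ t ∈ S, p t + ∑ t ∈ Sᶜ, p t = ∑ t, p t :=
    Finset.sum_add_sum_compl S p
  have hkTr : ((T : ℝ) - (k : ℝ)) = ((T - k : ℕ) : ℝ) := by
    push_cast [Nat.cast_sub hkT]; ring
  have hSle : ∑ t ∈ S, p t ≤ (k : ℝ) * phi := by
    calc ∑ t ∈ S, p t ≤ ∑ _t ∈ S, phi :=
          Finset.sum_le_sum (fun t _ => (hplim t).2)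
      _ = (k : ℝ) * phi := by rw [Finset.sum_const, hS, nsmul_eq_mul]
  have hSge : (k : ℝ) * plo ≤ ∑ t ∈ S, p t := by
    calc (k : ℝ) * plo = ∑ _t ∈ S, plo := by rw [Finset.sum_const, hS, nsmul_eq_mul]
      _ ≤ ∑ t ∈ S, p t := Finset.sum_le_sum (fun t _ => (hplim t).1)
  have hCle : ∑ t ∈ Sᶜ, p t ≤ ((T : ℝ) - (k : ℝ)) * phi := by
    rw [hkTr]
    calc ∑ t ∈ Sᶜ, p t ≤ ∑ _t ∈ Sᶜ, phi :=
          Finset.sum_le_sum (fun t _ => (hplim t).2)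
      _ = ((T - k : ℕ) : ℝ) * phi := by rw [Finset.sum_const, hcard, nsmul_eq_mul]
  have hCge : ((T : ℝ) - (k : ℝ)) * plo ≤ ∑ t ∈ Sᶜ, p t := by
    rw [hkTr]
    calc ((T - k : ℕ) : ℝ) * plo = ∑ _t ∈ Sᶜ, plo := by
          rw [Finset.sum_const, hcard, nsmul_eq_mul]
      _ ≤ ∑ t ∈ Sᶜ, p t := Finset.sum_le_sum (fun t _ => (hplim t).1)
  obtain ⟨he1, he2⟩ := helim
  constructor
  · apply le_min
    · calc Δt * ∑ t ∈ S, p t ≤ Δt * ((k : ℝ) * phi) := by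
            exact mul_le_mul_of_nonneg_left hSle hΔt.le
        _ = (k : ℝ) * phi * Δt := by ring
    · have : Δt * ∑ t ∈ S, p t = Δt * ∑ t, p t - Δt * ∑ t ∈ Sᶜ, p t := by
        rw [← hsplit]; ring
      rw [this]
      have := mul_le_mul_of_nonneg_left hCge hΔt.le
      linarith
  · apply max_le
    · calc (k : ℝ) * plo * Δt = Δt * ((k : ℝ) * plo) := by ring
        _ ≤ Δt * ∑ t ∈ S, p t := mul_le_mul_of_nonneg_left hSge hΔt.le
    · have : Δt * ∑ t ∈ S, p t = Δt * ∑ t, p t - Δt * ∑ t ∈ Sᶜ, p t := by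
        rw [← hsplit]; ring
      rw [this]
      have := mul_le_mul_of_nonneg_left hCle hΔt.le
      linarith
end
end
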